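/- arXiv:2107.10660 — 2 statements merged into one kernel-verified Lean document; each statement's English description precedes it below -/
import Mathlib

section
/- Let G be a connected simple graph that contains an induced 2K_2. Then either G is isomorphic to one of 2K_2, P_5, the hammer, the butterfly, or C_6, or there exists an edge e ∈ E(G) such that G/e contains an induced 2K_2 or an induced C_4. -/
open SimpleGraph

/-- Contraction of the edge between adjacent vertices `u` and `v`:
`v` is merged into `u`, so the vertex set is `V \ {v}`, and `u` inherits
the neighbours of `v`; loops and multiple edges are removed. -/
def SimpleGraph.contractEdge {V : Type*} (G : SimpleGraph V) (u v : V) :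
    SimpleGraph {x : V // x ≠ v} where
  Adj a b := a ≠ b ∧
    (G.Adj a.1 b.1 ∨ (a.1 = u ∧ G.Adj v b.1) ∨ (b.1 = u ∧ G.Adj v a.1))
  symm := by
    refine ⟨?_⟩
    rintro a b ⟨hab, h⟩
    refine ⟨hab.symm, ?_⟩
    rcases h with h | ⟨h1, h2⟩ | ⟨h1, h2⟩
    · exact Or.inl h.symm
    · exact Or.inr (Or.inr ⟨h1, h2⟩)
    · exact Or.inr (Or.inl ⟨h1, h2⟩)
  loopless := by refine ⟨?_⟩; rintro a ⟨hab, -⟩; exact hab rfl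

/-- `G` contains an induced subgraph isomorphic to `H`. -/
def SimpleGraph.HasInduced {V W : Type*} (G : SimpleGraph V) (H : SimpleGraph W) : Prop :=
  ∃ S : Set V, Nonempty (G.induce S ≃g H)

/-- A set of vertices is independent if its vertices are pairwise nonadjacent. -/
def SimpleGraph.IsIndependentSet {V : Type*} (G : SimpleGraph V) (S : Set V) : Prop :=
  S.Pairwise fun a b => ¬ G.Adj a b

/-- `2K₂`: two disjoint edges. -/
def twoK2 : SimpleGraph (Fin 4) := fromEdgeSet {s(0,1), s(2,3)}

/-- The hammer: a triangle `0,1,2` with the path `2-3-4` of length two attached. -/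
def hammerGraph : SimpleGraph (Fin 5) :=
  fromEdgeSet {s(0,1), s(0,2), s(1,2), s(2,3), s(3,4)}

/-- The butterfly: two triangles `0,1,2` and `2,3,4` sharing exactly the vertex `2`. -/
def butterflyGraph : SimpleGraph (Fin 5) :=
  fromEdgeSet {s(0,1), s(0,2), s(1,2), s(2,3), s(2,4), s(3,4)}

/-!
Fix an induced `2K₂` with edges `ab`, `cd`, put `T = {a, b, c, d}`, and assume that no contraction
creates an induced `2K₂` or `C₄`. Contracting an edge that misses `T` keeps the `2K₂`, so the
vertices outside `T` are independent and all their neighbours lie in `T`. Merging an outside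
vertex `w` into a neighbour `a` keeps the `2K₂` unless `w` also sees `c` or `d`; as `G` is
connected, `w` has a neighbour, so every outside vertex sees both edges of the `2K₂`. If two
outside vertices had a common neighbour, say `a`, then contracting `cd` would close an induced
`C₄` through `a`. So the outside vertices have disjoint neighbourhoods in `{a, b}`: there are at
most two of them, and the few graphs that remain are `2K₂`, `P₅`, the hammer, the butterfly and
`C₆`.
-/

namespace SimpleGraph

variable {V W : Type*} {G : SimpleGraph V} {H : SimpleGraph W}

def IsPointDetermining (H : SimpleGraph W) : Prop :=
  ∀ i j, (∀ k, H.Adj i k ↔ H.Adj j k) → i = j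

theorem isPointDetermining_twoK2 : twoK2.IsPointDetermining := by
  unfold IsPointDetermining twoK2; decide

theorem isPointDetermining_pathGraph_five : (pathGraph 5).IsPointDetermining := by
  unfold IsPointDetermining; simp only [pathGraph_adj]; decide

theorem isPointDetermining_hammerGraph : hammerGraph.IsPointDetermining := by
  unfold IsPointDetermining hammerGraph; decide

theorem isPointDetermining_butterflyGraph : butterflyGraph.IsPointDetermining := by
  unfold IsPointDetermining butterflyGraph; decide

theorem isPointDetermining_cycleGraph_six : (cycleGraph 6).IsPointDetermining := by
  unfold IsPointDetermining; decide

theorem hasInduced_iff_isIndContained : G.HasInduced H ↔ H ⊴ G := by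
  rw [isIndContained_iff_exists_iso_induce]
  exact exists_congr fun _ => ⟨Nonempty.map Iso.symm, Nonempty.map Iso.symm⟩

theorem hasInduced_of_adj_iff {f : W → V} (hf : f.Injective)
    (hadj : ∀ i j, G.Adj (f i) (f j) ↔ H.Adj i j) : G.HasInduced H :=
  hasInduced_iff_isIndContained.2 ⟨⟨⟨f, hf⟩, hadj _ _⟩⟩

theorem injective_of_adj_iff {f : W → V} (hH : H.IsPointDetermining)
    (hadj : ∀ i j, G.Adj (f i) (f j) ↔ H.Adj i j) : f.Injective :=
  fun i j hij => hH i j fun k => by rw [← hadj, ← hadj, hij]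

theorem nonempty_iso_of_adj_iff {f : W → V} (hH : H.IsPointDetermining)
    (hf : f.Surjective) (hadj : ∀ i j, G.Adj (f i) (f j) ↔ H.Adj i j) : Nonempty (G ≃g H) :=
  ⟨(⟨Equiv.ofBijective f ⟨injective_of_adj_iff hH hadj, hf⟩, hadj _ _⟩ : H ≃g G).symm⟩

theorem hasInduced_cycleGraph_four {p q r s : V} (hpq : G.Adj p q) (hqr : G.Adj q r)
    (hrs : G.Adj r s) (hsp : G.Adj s p) (hpr : ¬G.Adj p r) (hqs : ¬G.Adj q s) (hpr_ne : p ≠ r)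
    (hqs_ne : q ≠ s) : G.HasInduced (cycleGraph 4) := by
  have := hpq.ne; have := hqr.ne; have := hrs.ne; have := hsp.ne
  refine hasInduced_of_adj_iff (f := ![p, q, r, s]) (fun i j hij => ?_) fun i j => ?_
  · fin_cases i <;> fin_cases j <;> simp_all [eq_comm]
  · fin_cases i <;> fin_cases j <;> simp_all [cycleGraph_adj, G.adj_comm] <;> decide

structure IsInducedTwoK2 (G : SimpleGraph V) (a b c d : V) : Prop where
  adj_ab : G.Adj a b
  adj_cd : G.Adj c d
  not_adj_ac : ¬G.Adj a c
  not_adj_ad : ¬G.Adj a d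
  not_adj_bc : ¬G.Adj b c
  not_adj_bd : ¬G.Adj b d

theorem isInducedTwoK2_iff {a b c d : V} : IsInducedTwoK2 G a b c d ↔
    ∀ i j, G.Adj (![a, b, c, d] i) (![a, b, c, d] j) ↔ twoK2.Adj i j := by
  constructor
  · rintro ⟨hab, hcd, hac, had, hbc, hbd⟩ i j
    fin_cases i <;> fin_cases j <;> simp_all [twoK2, G.adj_comm]
  · intro hadj
    refine ⟨?_, ?_, ?_, ?_, ?_, ?_⟩
    · simpa [twoK2] using hadj 0 1
    · simpa [twoK2] using hadj 2 3
    · simpa [twoK2] using hadj 0 2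
    · simpa [twoK2] using hadj 0 3
    · simpa [twoK2] using hadj 1 2
    · simpa [twoK2] using hadj 1 3

theorem hasInduced_twoK2_iff : G.HasInduced twoK2 ↔ ∃ a b c d, IsInducedTwoK2 G a b c d := by
  constructor
  · rw [hasInduced_iff_isIndContained]
    rintro ⟨f⟩
    refine ⟨f 0, f 1, f 2, f 3, isInducedTwoK2_iff.2 fun i j => ?_⟩
    fin_cases i <;> fin_cases j <;> exact f.map_adj_iff
  · rintro ⟨a, b, c, d, h⟩
    have hadj := isInducedTwoK2_iff.1 h
    exact hasInduced_of_adj_iff (injective_of_adj_iff isPointDetermining_twoK2 hadj) hadj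

section contractEdge

variable {u v : V}

theorem contractEdge_adj_of_ne {x y : {x // x ≠ v}} (hx : x.1 ≠ u) (hy : y.1 ≠ u) :
    (G.contractEdge u v).Adj x y ↔ G.Adj x y := by
  simp only [contractEdge, hx, hy, false_and, or_false]
  exact ⟨And.right, fun hxy => ⟨fun e => hxy.ne (congrArg Subtype.val e), hxy⟩⟩

theorem contractEdge_adj_mk (huv : u ≠ v) {y : {x // x ≠ v}} (hy : y.1 ≠ u) :
    (G.contractEdge u v).Adj ⟨u, huv⟩ y ↔ G.Adj u y ∨ G.Adj v y := by
  simp only [contractEdge, hy, false_and, or_false, true_and]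
  exact ⟨And.right, fun h => ⟨fun e => hy (congrArg Subtype.val e).symm, h⟩⟩

end contractEdge

namespace IsInducedTwoK2

variable {a b c d u v w w' : V}

theorem swap_left (h : IsInducedTwoK2 G a b c d) : IsInducedTwoK2 G b a c d :=
  ⟨h.adj_ab.symm, h.adj_cd, h.not_adj_bc, h.not_adj_bd, h.not_adj_ac, h.not_adj_ad⟩

theorem swap_right (h : IsInducedTwoK2 G a b c d) : IsInducedTwoK2 G a b d c :=
  ⟨h.adj_ab, h.adj_cd.symm, h.not_adj_ad, h.not_adj_ac, h.not_adj_bd, h.not_adj_bc⟩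

theorem swap (h : IsInducedTwoK2 G a b c d) : IsInducedTwoK2 G c d a b :=
  ⟨h.adj_cd, h.adj_ab, fun e => h.not_adj_ac e.symm, fun e => h.not_adj_bc e.symm,
    fun e => h.not_adj_ad e.symm, fun e => h.not_adj_bd e.symm⟩

theorem ne_ac (h : IsInducedTwoK2 G a b c d) : a ≠ c :=
  fun e => h.not_adj_ad (e ▸ h.adj_cd)

theorem ne_ad (h : IsInducedTwoK2 G a b c d) : a ≠ d :=
  fun e => h.not_adj_ac (e ▸ h.adj_cd.symm)

theorem hasInduced_contractEdge_of_not_mem (h : IsInducedTwoK2 G a b c d)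
    (hu : u ∉ ({a, b, c, d} : Set V)) (hv : v ∉ ({a, b, c, d} : Set V)) :
    (G.contractEdge u v).HasInduced twoK2 := by
  simp only [Set.mem_insert_iff, Set.mem_singleton_iff, not_or] at hu hv
  obtain ⟨hua, hub, huc, hud⟩ := hu
  obtain ⟨hva, hvb, hvc, hvd⟩ := hv
  refine hasInduced_twoK2_iff.2
    ⟨⟨a, Ne.symm hva⟩, ⟨b, Ne.symm hvb⟩, ⟨c, Ne.symm hvc⟩, ⟨d, Ne.symm hvd⟩, ?_⟩
  obtain ⟨hab, hcd, hac, had, hbc, hbd⟩ := h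
  constructor <;>
    simp [contractEdge_adj_of_ne, Ne.symm hua, Ne.symm hub, Ne.symm huc, Ne.symm hud, *]

theorem hasInduced_contractEdge_of_adj (h : IsInducedTwoK2 G a b c d) (haw : G.Adj a w)
    (hwb : w ≠ b) (hwc : ¬G.Adj w c) (hwd : ¬G.Adj w d) :
    (G.contractEdge a w).HasInduced twoK2 := by
  have hcw : c ≠ w := fun e => hwd (e ▸ h.adj_cd)
  have hdw : d ≠ w := fun e => hwc (e ▸ h.adj_cd.symm)
  refine hasInduced_twoK2_iff.2 ⟨⟨a, haw.ne⟩, ⟨b, hwb.symm⟩, ⟨c, hcw⟩, ⟨d, hdw⟩, ?_⟩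
  have hba : b ≠ a := h.adj_ab.ne.symm
  have hca : c ≠ a := h.ne_ac.symm
  have hda : d ≠ a := h.ne_ad.symm
  refine ⟨?_, ?_, ?_, ?_, ?_, ?_⟩
  · exact (contractEdge_adj_mk haw.ne hba).2 (Or.inl h.adj_ab)
  · exact (contractEdge_adj_of_ne hca hda).2 h.adj_cd
  · rw [contractEdge_adj_mk haw.ne hca]
    exact not_or.2 ⟨h.not_adj_ac, hwc⟩
  · rw [contractEdge_adj_mk haw.ne hda]
    exact not_or.2 ⟨h.not_adj_ad, hwd⟩
  · rw [contractEdge_adj_of_ne hba hca]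
    exact h.not_adj_bc
  · rw [contractEdge_adj_of_ne hba hda]
    exact h.not_adj_bd

theorem hasInduced_cycleGraph_four_contractEdge (h : IsInducedTwoK2 G a b c d)
    (hwa : G.Adj w a) (hw'a : G.Adj w' a) (hww' : ¬G.Adj w w') (hne : w ≠ w')
    (hw : G.Adj w c ∨ G.Adj w d) (hw' : G.Adj w' c ∨ G.Adj w' d) :
    (G.contractEdge c d).HasInduced (cycleGraph 4) := by
  have hcd := h.adj_cd.ne
  have hwc : w ≠ c := fun e => h.not_adj_ac (e ▸ hwa.symm)
  have hwd : w ≠ d := fun e => h.not_adj_ad (e ▸ hwa.symm)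
  have hw'c : w' ≠ c := fun e => h.not_adj_ac (e ▸ hw'a.symm)
  have hw'd : w' ≠ d := fun e => h.not_adj_ad (e ▸ hw'a.symm)
  -- the induced cycle is `a, w, c, w'`, where `c` now stands for the merged vertex `cd`
  refine hasInduced_cycleGraph_four (p := ⟨a, h.ne_ad⟩) (q := ⟨w, hwd⟩) (r := ⟨c, hcd⟩)
    (s := ⟨w', hw'd⟩) ?_ ?_ ?_ ?_ ?_ ?_ ?_ ?_
  · exact (contractEdge_adj_of_ne h.ne_ac hwc).2 hwa.symm
  · exact ((contractEdge_adj_mk hcd hwc).2 (hw.imp .symm .symm)).symm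
  · exact (contractEdge_adj_mk hcd hw'c).2 (hw'.imp .symm .symm)
  · exact (contractEdge_adj_of_ne hw'c h.ne_ac).2 hw'a
  · rw [adj_comm, contractEdge_adj_mk hcd h.ne_ac]
    exact not_or.2 ⟨fun e => h.not_adj_ac e.symm, fun e => h.not_adj_ad e.symm⟩
  · rwa [contractEdge_adj_of_ne hwc hw'c]
  · exact fun e => h.ne_ac (congrArg Subtype.val e)
  · exact fun e => hne (congrArg Subtype.val e)

theorem mem_of_adj (h : IsInducedTwoK2 G a b c d)
    (h2 : ∀ u v, G.Adj u v → ¬(G.contractEdge u v).HasInduced twoK2) (huv : G.Adj u v) :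
    u ∈ ({a, b, c, d} : Set V) ∨ v ∈ ({a, b, c, d} : Set V) := by
  by_contra! huv'
  exact h2 u v huv (h.hasInduced_contractEdge_of_not_mem huv'.1 huv'.2)

theorem adj_right_of_adj_left (h : IsInducedTwoK2 G a b c d)
    (h2 : ∀ u v, G.Adj u v → ¬(G.contractEdge u v).HasInduced twoK2) (hwb : w ≠ b)
    (hwa : G.Adj w a) : G.Adj w c ∨ G.Adj w d := by
  by_contra! hw
  exact h2 a w hwa.symm (h.hasInduced_contractEdge_of_adj hwa.symm hwb hw.1 hw.2)

theorem adj_left_and_adj_right (h : IsInducedTwoK2 G a b c d) (hG : G.Connected)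
    (h2 : ∀ u v, G.Adj u v → ¬(G.contractEdge u v).HasInduced twoK2)
    (hw : w ∉ ({a, b, c, d} : Set V)) :
    (G.Adj w a ∨ G.Adj w b) ∧ (G.Adj w c ∨ G.Adj w d) := by
  have : Nontrivial V := ⟨⟨a, b, h.adj_ab.ne⟩⟩
  obtain ⟨z, hwz⟩ := hG.preconnected.exists_adj_of_nontrivial w
  have hz := (h.mem_of_adj h2 hwz).resolve_left hw
  simp only [Set.mem_insert_iff, Set.mem_singleton_iff, not_or] at hz hw
  obtain ⟨hwa, hwb, hwc, hwd⟩ := hw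
  rcases hz with rfl | rfl | rfl | rfl
  · exact ⟨Or.inl hwz, h.adj_right_of_adj_left h2 hwb hwz⟩
  · exact ⟨Or.inr hwz, h.swap_left.adj_right_of_adj_left h2 hwa hwz⟩
  · exact ⟨h.swap.adj_right_of_adj_left h2 hwd hwz, Or.inl hwz⟩
  · exact ⟨h.swap.swap_left.adj_right_of_adj_left h2 hwc hwz, Or.inr hwz⟩

theorem not_adj_of_adj (h : IsInducedTwoK2 G a b c d) (hG : G.Connected)
    (h2 : ∀ u v, G.Adj u v → ¬(G.contractEdge u v).HasInduced twoK2)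
    (h4 : ∀ u v, G.Adj u v → ¬(G.contractEdge u v).HasInduced (cycleGraph 4))
    (hw : w ∉ ({a, b, c, d} : Set V)) (hw' : w' ∉ ({a, b, c, d} : Set V)) (hne : w ≠ w')
    {x : V} (hwx : G.Adj w x) : ¬G.Adj w' x := by
  intro hw'x
  have hww' : ¬G.Adj w w' := fun e => (h.mem_of_adj h2 e).elim hw hw'
  have sw := h.adj_left_and_adj_right hG h2 hw
  have sw' := h.adj_left_and_adj_right hG h2 hw'
  have hx := (h.mem_of_adj h2 hwx).resolve_left hw
  simp only [Set.mem_insert_iff, Set.mem_singleton_iff] at hx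
  rcases hx with rfl | rfl | rfl | rfl
  · exact h4 c d h.adj_cd
      (h.hasInduced_cycleGraph_four_contractEdge hwx hw'x hww' hne sw.2 sw'.2)
  · exact h4 c d h.adj_cd
      (h.swap_left.hasInduced_cycleGraph_four_contractEdge hwx hw'x hww' hne sw.2 sw'.2)
  · exact h4 a b h.adj_ab
      (h.swap.hasInduced_cycleGraph_four_contractEdge hwx hw'x hww' hne sw.1 sw'.1)
  · exact h4 a b h.adj_ab
      (h.swap.swap_left.hasInduced_cycleGraph_four_contractEdge hwx hw'x hww' hne sw.1 sw'.1)

theorem nonempty_iso_twoK2 (h : IsInducedTwoK2 G a b c d)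
    (hV : ∀ x, x = a ∨ x = b ∨ x = c ∨ x = d) : Nonempty (G ≃g twoK2) :=
  nonempty_iso_of_adj_iff isPointDetermining_twoK2
    (fun x => by simpa [Fin.exists_fin_succ, eq_comm] using hV x) (isInducedTwoK2_iff.1 h)

theorem nonempty_iso_pathGraph_five (h : IsInducedTwoK2 G a b c d) (hwa : G.Adj w a)
    (hwc : G.Adj w c) (hwb : ¬G.Adj w b) (hwd : ¬G.Adj w d)
    (hV : ∀ x, x = a ∨ x = b ∨ x = c ∨ x = d ∨ x = w) : Nonempty (G ≃g pathGraph 5) := by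
  refine nonempty_iso_of_adj_iff (f := ![b, a, w, c, d]) isPointDetermining_pathGraph_five
    (fun x => by simpa [Fin.exists_fin_succ, eq_comm, or_comm, or_left_comm] using hV x)
    fun i j => ?_
  obtain ⟨hab, hcd, hac, had, hbc, hbd⟩ := h
  fin_cases i <;> fin_cases j <;> simp_all [pathGraph_adj, G.adj_comm]

theorem nonempty_iso_hammerGraph (h : IsInducedTwoK2 G a b c d) (hwa : G.Adj w a)
    (hwb : G.Adj w b) (hwc : G.Adj w c) (hwd : ¬G.Adj w d)
    (hV : ∀ x, x = a ∨ x = b ∨ x = c ∨ x = d ∨ x = w) : Nonempty (G ≃g hammerGraph) := by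
  refine nonempty_iso_of_adj_iff (f := ![a, b, w, c, d]) isPointDetermining_hammerGraph
    (fun x => by simpa [Fin.exists_fin_succ, eq_comm, or_comm, or_left_comm] using hV x)
    fun i j => ?_
  obtain ⟨hab, hcd, hac, had, hbc, hbd⟩ := h
  fin_cases i <;> fin_cases j <;> simp_all [hammerGraph, G.adj_comm]

theorem nonempty_iso_butterflyGraph (h : IsInducedTwoK2 G a b c d) (hwa : G.Adj w a)
    (hwb : G.Adj w b) (hwc : G.Adj w c) (hwd : G.Adj w d)
    (hV : ∀ x, x = a ∨ x = b ∨ x = c ∨ x = d ∨ x = w) : Nonempty (G ≃g butterflyGraph) := by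
  refine nonempty_iso_of_adj_iff (f := ![a, b, w, c, d]) isPointDetermining_butterflyGraph
    (fun x => by simpa [Fin.exists_fin_succ, eq_comm, or_comm, or_left_comm] using hV x)
    fun i j => ?_
  obtain ⟨hab, hcd, hac, had, hbc, hbd⟩ := h
  fin_cases i <;> fin_cases j <;> simp_all [butterflyGraph, G.adj_comm]

theorem nonempty_iso_cycleGraph_six (h : IsInducedTwoK2 G a b c d) (hwa : G.Adj w a)
    (hwc : G.Adj w c) (hw'b : G.Adj w' b) (hw'd : G.Adj w' d) (hwb : ¬G.Adj w b)
    (hwd : ¬G.Adj w d) (hw'a : ¬G.Adj w' a) (hw'c : ¬G.Adj w' c) (hww' : ¬G.Adj w w')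
    (hV : ∀ x, x = a ∨ x = b ∨ x = c ∨ x = d ∨ x = w ∨ x = w') :
    Nonempty (G ≃g cycleGraph 6) := by
  refine nonempty_iso_of_adj_iff (f := ![a, w, c, d, w', b])
    isPointDetermining_cycleGraph_six
    (fun x => by simpa [Fin.exists_fin_succ, eq_comm, or_comm, or_left_comm] using hV x)
    fun i j => ?_
  obtain ⟨hab, hcd, hac, had, hbc, hbd⟩ := h
  fin_cases i <;> fin_cases j <;> simp_all [cycleGraph_adj, G.adj_comm] <;> decide

theorem nonempty_iso_of_forall_eq_or_eq (h : IsInducedTwoK2 G a b c d)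
    (hw : (G.Adj w a ∨ G.Adj w b) ∧ (G.Adj w c ∨ G.Adj w d))
    (hV : ∀ x, x = a ∨ x = b ∨ x = c ∨ x = d ∨ x = w) :
    Nonempty (G ≃g pathGraph 5) ∨ Nonempty (G ≃g hammerGraph) ∨
      Nonempty (G ≃g butterflyGraph) := by
  wlog hwa : G.Adj w a generalizing a b
  · exact this h.swap_left ⟨hw.1.symm, hw.2⟩
      (fun x => by simpa only [or_comm, or_left_comm] using hV x) (hw.1.resolve_left hwa)
  wlog hwc : G.Adj w c generalizing c d
  · exact this h.swap_right ⟨hw.1, hw.2.symm⟩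
      (fun x => by simpa only [or_comm, or_left_comm] using hV x) (hw.2.resolve_left hwc)
  by_cases hwb : G.Adj w b <;> by_cases hwd : G.Adj w d
  · exact Or.inr (Or.inr (h.nonempty_iso_butterflyGraph hwa hwb hwc hwd hV))
  · exact Or.inr (Or.inl (h.nonempty_iso_hammerGraph hwa hwb hwc hwd hV))
  · exact Or.inr (Or.inl (h.swap.nonempty_iso_hammerGraph hwc hwd hwa hwb
      (fun x => by simpa only [or_comm, or_left_comm] using hV x)))
  · exact Or.inl (h.nonempty_iso_pathGraph_five hwa hwc hwb hwd hV)

theorem nonempty_iso_cycleGraph_six_of_forall_eq_or_eq (h : IsInducedTwoK2 G a b c d)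
    (hw : (G.Adj w a ∨ G.Adj w b) ∧ (G.Adj w c ∨ G.Adj w d))
    (hw' : (G.Adj w' a ∨ G.Adj w' b) ∧ (G.Adj w' c ∨ G.Adj w' d)) (hww' : ¬G.Adj w w')
    (hdisj : ∀ x, G.Adj w x → ¬G.Adj w' x)
    (hV : ∀ x, x = a ∨ x = b ∨ x = c ∨ x = d ∨ x = w ∨ x = w') :
    Nonempty (G ≃g cycleGraph 6) := by
  wlog hwa : G.Adj w a generalizing a b
  · exact this h.swap_left ⟨hw.1.symm, hw.2⟩ ⟨hw'.1.symm, hw'.2⟩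
      (fun x => by simpa only [or_comm, or_left_comm] using hV x) (hw.1.resolve_left hwa)
  wlog hwc : G.Adj w c generalizing c d
  · exact this h.swap_right ⟨hw.1, hw.2.symm⟩ ⟨hw'.1, hw'.2.symm⟩
      (fun x => by simpa only [or_comm, or_left_comm] using hV x) (hw.2.resolve_left hwc)
  have hw'b := hw'.1.resolve_left (hdisj a hwa)
  have hw'd := hw'.2.resolve_left (hdisj c hwc)
  exact h.nonempty_iso_cycleGraph_six hwa hwc hw'b hw'd (fun e => hdisj b e hw'b)
    (fun e => hdisj d e hw'd) (hdisj a hwa) (hdisj c hwc) hww' hV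

theorem eq_or_eq_of_not_mem (h : IsInducedTwoK2 G a b c d) (hG : G.Connected)
    (h2 : ∀ u v, G.Adj u v → ¬(G.contractEdge u v).HasInduced twoK2)
    (h4 : ∀ u v, G.Adj u v → ¬(G.contractEdge u v).HasInduced (cycleGraph 4))
    (hw : w ∉ ({a, b, c, d} : Set V)) (hw' : w' ∉ ({a, b, c, d} : Set V)) (hne : w ≠ w')
    {x : V} (hx : x ∉ ({a, b, c, d} : Set V)) : x = w ∨ x = w' := by
  by_contra! hxw
  -- three distinct outside vertices cannot have pairwise disjoint neighbourhoods in `{a, b}`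
  rcases (h.adj_left_and_adj_right hG h2 hw).1 with hwz | hwz <;>
    rcases (h.adj_left_and_adj_right hG h2 hw').1 with hw'z | hw'z <;>
    rcases (h.adj_left_and_adj_right hG h2 hx).1 with hxz | hxz <;>
    first
    | exact h.not_adj_of_adj hG h2 h4 hw hw' hne hwz hw'z
    | exact h.not_adj_of_adj hG h2 h4 hw hx (Ne.symm hxw.1) hwz hxz
    | exact h.not_adj_of_adj hG h2 h4 hw' hx (Ne.symm hxw.2) hw'z hxz

theorem nonempty_iso_of_forall_contractEdge (h : IsInducedTwoK2 G a b c d) (hG : G.Connected)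
    (h2 : ∀ u v, G.Adj u v → ¬(G.contractEdge u v).HasInduced twoK2)
    (h4 : ∀ u v, G.Adj u v → ¬(G.contractEdge u v).HasInduced (cycleGraph 4)) :
    Nonempty (G ≃g twoK2) ∨ Nonempty (G ≃g pathGraph 5) ∨ Nonempty (G ≃g hammerGraph) ∨
      Nonempty (G ≃g butterflyGraph) ∨ Nonempty (G ≃g cycleGraph 6) := by
  have hmem x : x ∈ ({a, b, c, d} : Set V) ↔ x = a ∨ x = b ∨ x = c ∨ x = d := by simp
  by_cases hO : ∃ w, w ∉ ({a, b, c, d} : Set V)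
  swap
  · push Not at hO
    exact Or.inl (h.nonempty_iso_twoK2 fun x => (hmem x).1 (hO x))
  obtain ⟨w, hw⟩ := hO
  have hsw := h.adj_left_and_adj_right hG h2 hw
  by_cases hO' : ∃ w', w' ∉ ({a, b, c, d} : Set V) ∧ w' ≠ w
  swap
  · push Not at hO'
    refine Or.inr ((h.nonempty_iso_of_forall_eq_or_eq hsw fun x => ?_).imp_right
      (.imp_right .inl))
    by_cases hx : x ∈ ({a, b, c, d} : Set V)
    · simp only [hmem] at hx
      tauto
    · simp [hO' x hx]
  obtain ⟨w', hw', hne⟩ := hO'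
  refine Or.inr (Or.inr (Or.inr (Or.inr (h.nonempty_iso_cycleGraph_six_of_forall_eq_or_eq hsw
    (h.adj_left_and_adj_right hG h2 hw') (fun e => (h.mem_of_adj h2 e).elim hw hw')
    (fun _ => h.not_adj_of_adj hG h2 h4 hw hw' hne.symm) fun x => ?_))))
  by_cases hx : x ∈ ({a, b, c, d} : Set V)
  · simp only [hmem] at hx
    tauto
  · have := h.eq_or_eq_of_not_mem hG h2 h4 hw hw' hne.symm hx
    tauto

end IsInducedTwoK2

end SimpleGraph

theorem stmt6_general {V : Type*} (G : SimpleGraph V)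
    (hG : G.Connected) (h2K2 : G.HasInduced twoK2) :
    Nonempty (G ≃g twoK2) ∨ Nonempty (G ≃g pathGraph 5) ∨
    Nonempty (G ≃g hammerGraph) ∨ Nonempty (G ≃g butterflyGraph) ∨
    Nonempty (G ≃g cycleGraph 6) ∨
    ∃ u v : V, G.Adj u v ∧
      ((G.contractEdge u v).HasInduced twoK2 ∨
        (G.contractEdge u v).HasInduced (cycleGraph 4)) := by
  obtain ⟨a, b, c, d, h⟩ := hasInduced_twoK2_iff.1 h2K2
  by_cases hcontract : ∃ u v : V, G.Adj u v ∧
      ((G.contractEdge u v).HasInduced twoK2 ∨ (G.contractEdge u v).HasInduced (cycleGraph 4))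
  · simp only [hcontract, or_true]
  push Not at hcontract
  have h2 u v (huv : G.Adj u v) := (hcontract u v huv).1
  have h4 u v (huv : G.Adj u v) := (hcontract u v huv).2
  simpa only [or_assoc, or_false] using Or.inl (h.nonempty_iso_of_forall_contractEdge hG h2 h4)

/-- Lemma 8. If a connected graph `G` has an induced `2K₂`, then
either `G` is isomorphic to `2K₂`, `P₅`, the hammer, the butterfly, or `C₆`, or some
edge contraction of `G` has an induced `2K₂` or an induced `C₄`. -/
theorem stmt6 {V : Type*} [Fintype V] [DecidableEq V] (G : SimpleGraph V)
    (hG : G.Connected) (h2K2 : G.HasInduced twoK2) :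
    Nonempty (G ≃g twoK2) ∨ Nonempty (G ≃g pathGraph 5) ∨
    Nonempty (G ≃g hammerGraph) ∨ Nonempty (G ≃g butterflyGraph) ∨
    Nonempty (G ≃g cycleGraph 6) ∨
    ∃ u v : V, G.Adj u v ∧
      ((G.contractEdge u v).HasInduced twoK2 ∨
        (G.contractEdge u v).HasInduced (cycleGraph 4)) :=
  stmt6_general G hG h2K2
end

section
/- Let G be a connected (2K_2, claw)-free simple graph and let C = {p, q, r, s} ⊆ V(G) be a vertex set inducing a 4-cycle in G with edges pq, qr, rs, sp. If u, v ∉ C are distinct vertices with |N_C(u)| = |N_C(v)| = 2, then u and v are adjacent. -/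
open SimpleGraph

/-- The claw `K_{1,3}`. -/
def clawGraph : SimpleGraph (Fin 4) := fromEdgeSet {s(0,1), s(0,2), s(0,3)}

/-!
Let `C = p q r s` be the induced square. A vertex outside `C` with two opposite neighbours on
`C`, say `p` and `r`, would be the third leaf of a claw centred at `p` (with leaves `q` and `s`),
so each of `u`, `v` sees exactly two consecutive vertices of `C`. If `u` and `v` were
nonadjacent, either they see the same side `ab` of `C`, and `a` is the centre of a claw with
leaves `u`, `v` and the other neighbour of `a` on `C`, or they see different sides, and one edge
from `u` to `C` together with one edge from `v` to `C` forms an induced `2K₂`.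
-/

theorem Set.ncard_sep_eq_two_of_nodup {α : Type*} {a b c d : α} (hdist : [a, b, c, d].Nodup)
    {P : α → Prop} (h : {x ∈ ({a, b, c, d} : Set α) | P x}.ncard = 2) :
    (P a ∧ P b ∧ ¬ P c ∧ ¬ P d) ∨ (P b ∧ P c ∧ ¬ P d ∧ ¬ P a) ∨
    (P c ∧ P d ∧ ¬ P a ∧ ¬ P b) ∨ (P d ∧ P a ∧ ¬ P b ∧ ¬ P c) ∨
    (P a ∧ P c ∧ ¬ P b ∧ ¬ P d) ∨ (P b ∧ P d ∧ ¬ P a ∧ ¬ P c) := by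
  classical
  have hsep : {x ∈ ({a, b, c, d} : Set α) | P x} =
      (({a, b, c, d} : Finset α).filter P : Set α) := by
    ext; simp
  simp only [List.nodup_cons, List.mem_cons, List.not_mem_nil, or_false, not_or] at hdist
  rw [hsep, Set.ncard_coe_finset, Finset.card_filter, Finset.sum_insert (by simp [hdist]),
    Finset.sum_insert (by simp [hdist]), Finset.sum_insert (by simp [hdist]),
    Finset.sum_singleton] at h
  by_cases P a <;> by_cases P b <;> by_cases P c <;> by_cases P d <;> simp_all

namespace SimpleGraph

variable {V W : Type*} {G : SimpleGraph V} {H : SimpleGraph W}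

theorem hasInduced_of_injective (f : W → V) (hf : Function.Injective f)
    (h : ∀ i j, G.Adj (f i) (f j) ↔ H.Adj i j) : G.HasInduced H :=
  ⟨Set.range f, ⟨(Embedding.isoInduceRange ⟨⟨f, hf⟩, h _ _⟩).symm⟩⟩

theorem hasInduced_clawGraph {a b c d : V} (hab : G.Adj a b) (hac : G.Adj a c)
    (had : G.Adj a d) (hbc : ¬ G.Adj b c) (hbd : ¬ G.Adj b d) (hcd : ¬ G.Adj c d)
    (hbc' : b ≠ c) (hbd' : b ≠ d) (hcd' : c ≠ d) : G.HasInduced clawGraph := by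
  have := hab.ne; have := hac.ne; have := had.ne
  refine hasInduced_of_injective ![a, b, c, d] (fun i j hij => ?_) fun i j => ?_
  · fin_cases i <;> fin_cases j <;> simp_all
  · fin_cases i <;> fin_cases j <;> simp [clawGraph, adj_comm, *]

theorem hasInduced_twoK2 {a b c d : V} (hab : G.Adj a b) (hcd : G.Adj c d)
    (hac : ¬ G.Adj a c) (had : ¬ G.Adj a d) (hbc : ¬ G.Adj b c) (hbd : ¬ G.Adj b d)
    (hac' : a ≠ c) (had' : a ≠ d) (hbc' : b ≠ c) (hbd' : b ≠ d) : G.HasInduced twoK2 := by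
  have := hab.ne; have := hcd.ne
  refine hasInduced_of_injective ![a, b, c, d] (fun i j hij => ?_) fun i j => ?_
  · fin_cases i <;> fin_cases j <;> simp_all
  · fin_cases i <;> fin_cases j <;> simp [twoK2, adj_comm, *]

variable {p q r s u v : V}

structure IsInducedSquare (G : SimpleGraph V) (p q r s : V) : Prop where
  adj_pq : G.Adj p q
  adj_qr : G.Adj q r
  adj_rs : G.Adj r s
  adj_sp : G.Adj s p
  not_adj_pr : ¬ G.Adj p r
  not_adj_qs : ¬ G.Adj q s
  ne_pr : p ≠ r
  ne_qs : q ≠ s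

theorem IsInducedSquare.rotate (h : G.IsInducedSquare p q r s) : G.IsInducedSquare q r s p :=
  ⟨h.adj_qr, h.adj_rs, h.adj_sp, h.adj_pq, h.not_adj_qs, fun hrp => h.not_adj_pr hrp.symm,
    h.ne_qs, h.ne_pr.symm⟩

def AdjExactlyFirstTwo (G : SimpleGraph V) (u a b c d : V) : Prop :=
  G.Adj u a ∧ G.Adj u b ∧ ¬ G.Adj u c ∧ ¬ G.Adj u d

def AdjExactlyConsecutive (G : SimpleGraph V) (u p q r s : V) : Prop :=
  G.AdjExactlyFirstTwo u p q r s ∨ G.AdjExactlyFirstTwo u q r s p ∨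
    G.AdjExactlyFirstTwo u r s p q ∨ G.AdjExactlyFirstTwo u s p q r

theorem AdjExactlyConsecutive.rotate (h : G.AdjExactlyConsecutive u p q r s) :
    G.AdjExactlyConsecutive u q r s p := by
  unfold AdjExactlyConsecutive at *
  tauto

theorem adjExactlyConsecutive_of_ncard_eq_two (hclaw : ¬ G.HasInduced clawGraph)
    (hdist : [p, q, r, s].Nodup) (hC : G.IsInducedSquare p q r s)
    (hu : u ∉ ({p, q, r, s} : Set V))
    (hN : {x ∈ ({p, q, r, s} : Set V) | G.Adj u x}.ncard = 2) :
    G.AdjExactlyConsecutive u p q r s := by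
  simp only [Set.mem_insert_iff, Set.mem_singleton_iff, not_or] at hu
  obtain ⟨hup, huq, hur, hus⟩ := hu
  rcases Set.ncard_sep_eq_two_of_nodup hdist hN with h | h | h | h |
    ⟨hpu, hru, hqu, hsu⟩ | ⟨hqu, hsu, hpu, hru⟩
  · exact Or.inl h
  · exact Or.inr (Or.inl h)
  · exact Or.inr (Or.inr (Or.inl h))
  · exact Or.inr (Or.inr (Or.inr h))
  · exact (hclaw (hasInduced_clawGraph hC.adj_pq hC.adj_sp.symm hpu.symm hC.not_adj_qs
      (mt G.adj_symm hqu) (mt G.adj_symm hsu) hC.ne_qs (Ne.symm huq) (Ne.symm hus))).elim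
  · exact (hclaw (hasInduced_clawGraph hC.adj_pq.symm hC.adj_qr hqu.symm hC.not_adj_pr
      (mt G.adj_symm hpu) (mt G.adj_symm hru) hC.ne_pr (Ne.symm hup) (Ne.symm hur))).elim

theorem adj_of_adjExactlyFirstTwo (hclaw : ¬ G.HasInduced clawGraph)
    (h2K2 : ¬ G.HasInduced twoK2) (hC : G.IsInducedSquare p q r s) (huv : u ≠ v)
    (hu : G.AdjExactlyFirstTwo u p q r s) (hv : G.AdjExactlyConsecutive v p q r s) :
    G.Adj u v := by
  by_contra huv'
  obtain ⟨hup, huq, hur, hus⟩ := hu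
  have hrp : ¬ G.Adj r p := mt G.adj_symm hC.not_adj_pr
  have hsq : ¬ G.Adj s q := mt G.adj_symm hC.not_adj_qs
  have twoK2_up_vr (hvr : G.Adj v r) (hvp : ¬ G.Adj v p) : G.HasInduced twoK2 :=
    hasInduced_twoK2 hup hvr huv' hur (mt G.adj_symm hvp) hC.not_adj_pr huv
      (G.ne_of_adj_of_not_adj hup hrp) (G.ne_of_adj_of_not_adj hvr hC.not_adj_pr).symm hC.ne_pr
  rcases hv with ⟨hvp, hvq, -, hvs⟩ | ⟨-, hvr, -, hvp⟩ | ⟨hvr, -, hvp, -⟩ |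
    ⟨hvs, -, hvq, -⟩
  · exact hclaw (hasInduced_clawGraph hup.symm hvp.symm hC.adj_sp.symm huv' hus hvs huv
      (G.ne_of_adj_of_not_adj huq hsq) (G.ne_of_adj_of_not_adj hvq hsq))
  · exact h2K2 (twoK2_up_vr hvr hvp)
  · exact h2K2 (twoK2_up_vr hvr hvp)
  · exact h2K2 (hasInduced_twoK2 huq hvs huv' hus (mt G.adj_symm hvq) hC.not_adj_qs huv
      (G.ne_of_adj_of_not_adj huq hsq) (G.ne_of_adj_of_not_adj hvs hC.not_adj_qs).symm
      hC.ne_qs)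

theorem adj_of_adjExactlyConsecutive (hclaw : ¬ G.HasInduced clawGraph)
    (h2K2 : ¬ G.HasInduced twoK2) (hC : G.IsInducedSquare p q r s) (huv : u ≠ v)
    (hu : G.AdjExactlyConsecutive u p q r s) (hv : G.AdjExactlyConsecutive v p q r s) :
    G.Adj u v := by
  rcases hu with hu | hu | hu | hu
  · exact adj_of_adjExactlyFirstTwo hclaw h2K2 hC huv hu hv
  · exact adj_of_adjExactlyFirstTwo hclaw h2K2 hC.rotate huv hu hv.rotate
  · exact adj_of_adjExactlyFirstTwo hclaw h2K2 hC.rotate.rotate huv hu hv.rotate.rotate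
  · exact adj_of_adjExactlyFirstTwo hclaw h2K2 hC.rotate.rotate.rotate huv hu
      hv.rotate.rotate.rotate

end SimpleGraph

theorem stmt16_general {V : Type*} (G : SimpleGraph V)
    (h2K2 : ¬ G.HasInduced twoK2) (hclaw : ¬ G.HasInduced clawGraph)
    (p q r s : V) (hdist : [p, q, r, s].Nodup)
    (hpq : G.Adj p q) (hqr : G.Adj q r) (hrs : G.Adj r s) (hsp : G.Adj s p)
    (hpr : ¬ G.Adj p r) (hqs : ¬ G.Adj q s)
    (u v : V) (hu : u ∉ ({p, q, r, s} : Set V)) (hv : v ∉ ({p, q, r, s} : Set V))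
    (huv : u ≠ v)
    (hNu : ({x ∈ ({p, q, r, s} : Set V) | G.Adj u x}).ncard = 2)
    (hNv : ({x ∈ ({p, q, r, s} : Set V) | G.Adj v x}).ncard = 2) :
    G.Adj u v := by
  obtain ⟨⟨-, hpr', -⟩, ⟨-, hqs'⟩, -⟩ :
      (p ≠ q ∧ p ≠ r ∧ p ≠ s) ∧ (q ≠ r ∧ q ≠ s) ∧ r ≠ s := by
    simpa using hdist
  have hC : G.IsInducedSquare p q r s := ⟨hpq, hqr, hrs, hsp, hpr, hqs, hpr', hqs'⟩
  exact adj_of_adjExactlyConsecutive hclaw h2K2 hC huv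
    (adjExactlyConsecutive_of_ncard_eq_two hclaw hdist hC hu hNu)
    (adjExactlyConsecutive_of_ncard_eq_two hclaw hdist hC hv hNv)

/-- Claim 12.10. In a connected `(2K₂, claw)`-free graph with an
induced 4-cycle on `C = {p,q,r,s}`, any two distinct vertices outside `C` having exactly
two neighbours in `C` are adjacent. -/
theorem stmt16 {V : Type*} [Fintype V] [DecidableEq V] (G : SimpleGraph V)
    (hG : G.Connected) (h2K2 : ¬ G.HasInduced twoK2) (hclaw : ¬ G.HasInduced clawGraph)
    (p q r s : V) (hdist : [p, q, r, s].Nodup)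
    (hpq : G.Adj p q) (hqr : G.Adj q r) (hrs : G.Adj r s) (hsp : G.Adj s p)
    (hpr : ¬ G.Adj p r) (hqs : ¬ G.Adj q s)
    (u v : V) (hu : u ∉ ({p, q, r, s} : Set V)) (hv : v ∉ ({p, q, r, s} : Set V))
    (huv : u ≠ v)
    (hNu : ({x ∈ ({p, q, r, s} : Set V) | G.Adj u x}).ncard = 2)
    (hNv : ({x ∈ ({p, q, r, s} : Set V) | G.Adj v x}).ncard = 2) :
    G.Adj u v :=
  stmt16_general G h2K2 hclaw p q r s hdist hpq hqr hrs hsp hpr hqs u v hu hv huv hNu hNv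
end
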